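/- Let a ∈ ℝ ∪ {−∞} and let φ : (a,∞) → ℝ be smooth with φ'(t) > 0 and φ''(t) ≥ 0 for all t, and assume φ' grows like t^α for some α > 1: there exists M > 0 with lim_{t→∞} φ'(t)/t^α = M. Let r₀ ≥ 0 and let u : [r₀, ω₊) → (a,∞) be a C² solution of the rotational [φ,e₃]-minimal equation u''(r) = (1 + u'(r)²)·(φ'(u(r)) − u'(r)/r) on (r₀, ω₊), maximal to the right, satisfying u'(r) > 0 and u''(r) > 0 for all r ∈ (r₀, ω₊) and lim_{r→ω₊} u(r) = +∞. Then ω₊ < +∞. -/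
import Mathlib


open Set Filter
open scoped ENNReal Topology

/-- The interval `[r₀, ω)` (all of `[r₀,∞)` when `ω = ∞`). -/
def DomFrom (r₀ : ℝ) (ω : ℝ≥0∞) : Set ℝ := {r : ℝ | r₀ ≤ r ∧ ENNReal.ofReal r < ω}

/-- The filter of `r → ω⁻` (i.e. `r → +∞` when `ω = ∞`). -/
noncomputable def rightEnd (ω : ℝ≥0∞) : Filter ℝ :=
  if ω = ⊤ then Filter.atTop else nhdsWithin ω.toReal (Set.Iio ω.toReal)

/-- Mean value inequality: if `f` is continuous on `[x,y]` with nonnegative derivative on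
`(x,y)`, then `f x ≤ f y`. -/
private lemma mvt_le {f f' : ℝ → ℝ} {x y : ℝ} (hxy : x ≤ y)
    (hc : ContinuousOn f (Set.Icc x y))
    (hder : ∀ t ∈ Set.Ioo x y, HasDerivAt f (f' t) t)
    (h0 : ∀ t ∈ Set.Ioo x y, 0 ≤ f' t) : f x ≤ f y := by
  have hmono : MonotoneOn f (Set.Icc x y) := by
    apply monotoneOn_of_deriv_nonneg (convex_Icc x y) hc
    · intro t ht
      rw [interior_Icc] at ht
      exact (hder t ht).differentiableAt.differentiableWithinAt
    · intro t ht
      rw [interior_Icc] at ht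
      rw [(hder t ht).deriv]
      exact h0 t ht
  exact hmono (Set.left_mem_Icc.2 hxy) (Set.right_mem_Icc.2 hxy) hxy

set_option maxHeartbeats 1000000 in
/-- If `φ' > 0`, `φ'' ≥ 0` and `φ'(t)/t^α → M > 0` for some `α > 1`,
then any rightward-maximal increasing strictly convex solution of the rotational
`[φ,e₃]`-minimal equation blowing up at `ω₊` satisfies `ω₊ < +∞`. -/
theorem stmt_15 (a : EReal) (φ φ' φ'' : ℝ → ℝ)
    (hφsm : ContDiffOn ℝ (⊤ : ℕ∞) φ {t : ℝ | a < (t : EReal)})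
    (hφd : ∀ t : ℝ, a < (t : EReal) → HasDerivAt φ (φ' t) t)
    (hφd2 : ∀ t : ℝ, a < (t : EReal) → HasDerivAt φ' (φ'' t) t)
    (hφ'pos : ∀ t : ℝ, a < (t : EReal) → 0 < φ' t)
    (hφ''nn : ∀ t : ℝ, a < (t : EReal) → 0 ≤ φ'' t)
    -- growth like `t^α`, `α > 1`
    (α M : ℝ) (hα : 1 < α) (hM : 0 < M)
    (hgrowth : Tendsto (fun t : ℝ => φ' t / t ^ α) atTop (𝓝 M))
    (r₀ : ℝ) (hr₀ : 0 ≤ r₀)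
    (ω : ℝ≥0∞) (hωr₀ : ENNReal.ofReal r₀ < ω)
    (u u' : ℝ → ℝ)
    (hmem : ∀ r ∈ DomFrom r₀ ω, a < (u r : EReal))
    (hd : ∀ r ∈ DomFrom r₀ ω, HasDerivWithinAt u (u' r) (DomFrom r₀ ω) r)
    (hu'c : ContinuousOn u' (DomFrom r₀ ω))
    (heq : ∀ r ∈ DomFrom r₀ ω, r₀ < r →
      HasDerivAt u' ((1 + u' r ^ 2) * (φ' (u r) - u' r / r)) r)
    (hu'pos : ∀ r ∈ DomFrom r₀ ω, r₀ < r → 0 < u' r)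
    (hu''pos : ∀ r ∈ DomFrom r₀ ω, r₀ < r →
      0 < (1 + u' r ^ 2) * (φ' (u r) - u' r / r))
    (hblow : Tendsto u (rightEnd ω) atTop)
    -- maximality to the right: no solution with the same data at `r₀` on a larger interval
    (hmax : ∀ ω' : ℝ≥0∞, ω < ω' →
      ¬ ∃ v v' : ℝ → ℝ,
        v r₀ = u r₀ ∧ v' r₀ = u' r₀ ∧
        (∀ r ∈ DomFrom r₀ ω', a < (v r : EReal)) ∧
        (∀ r ∈ DomFrom r₀ ω', HasDerivWithinAt v (v' r) (DomFrom r₀ ω') r) ∧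
        ContinuousOn v' (DomFrom r₀ ω') ∧
        (∀ r ∈ DomFrom r₀ ω', r₀ < r →
          HasDerivAt v' ((1 + v' r ^ 2) * (φ' (v r) - v' r / r)) r)) :
    ω < ⊤ := by
  by_contra hcon
  have hωtop : ω = ⊤ := by rwa [lt_top_iff_ne_top, not_ne_iff] at hcon
  subst hωtop
  -- unfold the domain and the filter
  have hdom : DomFrom r₀ ⊤ = Set.Ici r₀ := by
    ext r; simp [DomFrom]
  have hre : rightEnd ⊤ = atTop := by simp [rightEnd]
  rw [hdom] at hmem hd hu'c heq hu'pos hu''pos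
  rw [hre] at hblow
  -- basic setup
  set r₁ : ℝ := max (r₀ + 1) 1 with hr₁def
  have hr₁r₀ : r₀ < r₁ := lt_of_lt_of_le (by linarith) (le_max_left _ _)
  have hr₁1 : (1:ℝ) ≤ r₁ := le_max_right _ _
  -- φ' is monotone on (a, ∞)
  have hφ'mono : ∀ s t : ℝ, a < (s : EReal) → s ≤ t → φ' s ≤ φ' t := by
    intro s t hs hst
    have hmem' : ∀ z ∈ Set.Icc s t, a < (z : EReal) := fun z hz =>
      lt_of_lt_of_le hs (by exact_mod_cast hz.1)
    refine mvt_le hst (fun z hz => (hφd2 z (hmem' z hz)).continuousAt.continuousWithinAt)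
      (fun z hz => hφd2 z (hmem' z (Set.mem_Icc_of_Ioo hz)))
      (fun z hz => hφ''nn z (hmem' z (Set.mem_Icc_of_Ioo hz)))
  -- continuity of u
  have hucont : ContinuousOn u (Set.Ici r₀) := fun r hr => (hd r hr).continuousWithinAt
  -- u' is monotone
  have hu'mono : ∀ x y : ℝ, r₀ ≤ x → x ≤ y → u' x ≤ u' y := by
    intro x y hx hxy
    refine mvt_le (f' := fun z => (1 + u' z ^ 2) * (φ' (u z) - u' z / z)) hxy
      (hu'c.mono (fun z hz => le_trans hx hz.1)) ?_ ?_
    · intro z hz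
      exact heq z (le_trans hx hz.1.le) (lt_of_le_of_lt hx hz.1)
    · intro z hz
      exact (hu''pos z (le_trans hx hz.1.le) (lt_of_le_of_lt hx hz.1)).le
  -- u is monotone
  have humono : ∀ x y : ℝ, r₀ ≤ x → x ≤ y → u x ≤ u y := by
    intro x y hx hxy
    refine mvt_le (f' := u') hxy (hucont.mono (fun z hz => le_trans hx hz.1)) ?_ ?_
    · intro z hz
      have hz' : r₀ < z := lt_of_le_of_lt hx hz.1
      exact (hd z hz'.le).hasDerivAt (Ici_mem_nhds hz')
    · intro z hz
      have hz' : r₀ < z := lt_of_le_of_lt hx hz.1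
      exact (hu'pos z hz'.le hz').le
  -- Key estimate A : u'(r+h) ≥ h φ'(u r) / 3
  have hA : ∀ r h : ℝ, r₁ ≤ r → 0 < h → h ≤ 1 → h * φ' (u r) / 3 ≤ u' (r + h) := by
    intro r h hr hh hh1
    have hrr₀ : r₀ < r := lt_of_lt_of_le hr₁r₀ hr
    have hr1 : (1:ℝ) ≤ r := le_trans hr₁1 hr
    have hrpos : (0:ℝ) < r := by linarith
    set A := φ' (u r) with hAdef
    have hApos : 0 < A := hφ'pos _ (hmem r hrr₀.le)
    have key : (fun τ => u' τ * Real.exp ((τ - r) / r) - A * (τ - r)) r ≤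
        (fun τ => u' τ * Real.exp ((τ - r) / r) - A * (τ - r)) (r + h) := by
      refine mvt_le (f := fun τ => u' τ * Real.exp ((τ - r) / r) - A * (τ - r))
        (f' := fun τ =>
          ((1 + u' τ ^ 2) * (φ' (u τ) - u' τ / τ)) * Real.exp ((τ - r) / r)
            + u' τ * (Real.exp ((τ - r) / r) * (1 / r)) - A * 1)
        (x := r) (y := r + h) (by linarith) ?_ ?_ ?_
      · apply ContinuousOn.sub
        · exact (hu'c.mono (fun z hz => le_trans hrr₀.le hz.1)).mul
            (Real.continuous_exp.comp
              ((continuous_id.sub continuous_const).div_const r)).continuousOn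
        · exact (continuous_const.mul (continuous_id.sub continuous_const)).continuousOn
      · intro τ hτ
        have hτr₀ : r₀ < τ := lt_trans hrr₀ hτ.1
        have hE : HasDerivAt (fun τ : ℝ => Real.exp ((τ - r) / r))
            (Real.exp ((τ - r) / r) * (1 / r)) τ := by
          have h1 : HasDerivAt (fun τ : ℝ => (τ - r) / r) (1 / r) τ := by
            simpa using ((hasDerivAt_id τ).sub_const r).div_const r
          exact h1.exp
        exact ((heq τ hτr₀.le hτr₀).mul hE).sub
          (HasDerivAt.const_mul A ((hasDerivAt_id τ).sub_const r))
      · intro τ hτ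
        have hτr₀ : r₀ < τ := lt_trans hrr₀ hτ.1
        have hτpos : 0 < τ := lt_trans hrpos hτ.1
        have hp : 0 < u' τ := hu'pos τ hτr₀.le hτr₀
        have hX : 0 < φ' (u τ) - u' τ / τ := by
          have h2 := hu''pos τ hτr₀.le hτr₀
          nlinarith [sq_nonneg (u' τ)]
        have hφτ : A ≤ φ' (u τ) :=
          hφ'mono _ _ (hmem r hrr₀.le) (humono r τ hrr₀.le hτ.1.le)
        have hpr : u' τ / τ ≤ u' τ / r := by
          rw [div_le_div_iff₀ hτpos hrpos]
          nlinarith [hτ.1.le]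
        have hE1 : 1 ≤ Real.exp ((τ - r) / r) :=
          Real.one_le_exp (div_nonneg (by linarith [hτ.1.le]) hrpos.le)
        have hd1 : φ' (u τ) - u' τ / τ ≤ (1 + u' τ ^ 2) * (φ' (u τ) - u' τ / τ) := by
          nlinarith [sq_nonneg (u' τ)]
        have hsum : A ≤ (1 + u' τ ^ 2) * (φ' (u τ) - u' τ / τ) + u' τ / r := by
          nlinarith
        have hXr : (0:ℝ) ≤ (1 + u' τ ^ 2) * (φ' (u τ) - u' τ / τ) + u' τ / r := by
          positivity
        have hEX : (1 + u' τ ^ 2) * (φ' (u τ) - u' τ / τ) + u' τ / r ≤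
            ((1 + u' τ ^ 2) * (φ' (u τ) - u' τ / τ) + u' τ / r) * Real.exp ((τ - r) / r) :=
          le_mul_of_one_le_right hXr hE1
        have hfin : A ≤ ((1 + u' τ ^ 2) * (φ' (u τ) - u' τ / τ) + u' τ / r) *
            Real.exp ((τ - r) / r) := hsum.trans hEX
        have erw : u' τ * (Real.exp ((τ - r) / r) * (1 / r)) =
            u' τ / r * Real.exp ((τ - r) / r) := by ring
        rw [erw]
        nlinarith [hfin]
    simp only at key
    have key' : u' r ≤ u' (r + h) * Real.exp (h / r) - A * h := by
      have e1 : r + h - r = h := by ring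
      rw [e1] at key
      simpa using key
    have hexp3 : Real.exp (h / r) ≤ 3 := by
      have h1 : h / r ≤ 1 := by
        rw [div_le_one hrpos]; linarith
      calc Real.exp (h / r) ≤ Real.exp 1 := Real.exp_le_exp.2 h1
        _ ≤ 3 := Real.exp_one_lt_d9.le.trans (by norm_num)
    have hu'rh : 0 < u' (r + h) := hu'pos _ (by linarith : r₀ ≤ r + h) (by linarith)
    have hu'r : 0 < u' r := hu'pos _ hrr₀.le hrr₀
    nlinarith [mul_le_mul_of_nonneg_left hexp3 hu'rh.le]
  -- Key estimate B : u(r+2h) ≥ u(r) + h² φ'(u r) / 3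
  have hB : ∀ r h : ℝ, r₁ ≤ r → 0 < h → h ≤ 1 →
      u r + h ^ 2 * φ' (u r) / 3 ≤ u (r + 2 * h) := by
    intro r h hr hh hh1
    have hrr₀ : r₀ < r := lt_of_lt_of_le hr₁r₀ hr
    have step1 : u (r + h) + h * u' (r + h) ≤ u (r + 2 * h) := by
      have key : (fun τ => u τ - u' (r + h) * τ) (r + h) ≤
          (fun τ => u τ - u' (r + h) * τ) (r + 2 * h) := by
        refine mvt_le (f := fun τ => u τ - u' (r + h) * τ)
          (f' := fun τ => u' τ - u' (r + h) * 1)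
          (x := r + h) (y := r + 2 * h) (by linarith) ?_ ?_ ?_
        · exact (hucont.mono (fun z hz => le_trans (by linarith : r₀ ≤ r + h) hz.1)).sub
            (continuous_const.mul continuous_id).continuousOn
        · intro τ hτ
          have hτr₀ : r₀ < τ := by
            have := hτ.1; linarith
          exact ((hd τ hτr₀.le).hasDerivAt (Ici_mem_nhds hτr₀)).sub
            (HasDerivAt.const_mul (u' (r + h)) (hasDerivAt_id τ))
        · intro τ hτ
          have : u' (r + h) ≤ u' τ := hu'mono (r + h) τ (by linarith) hτ.1.le
          simp only [mul_one]; linarith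
      simp only at key
      nlinarith [key]
    have step2 := hA r h hr hh hh1
    have step3 : u r ≤ u (r + h) := humono r (r + h) hrr₀.le (by linarith)
    nlinarith [mul_le_mul_of_nonneg_left step2 hh.le]
  -- growth bound: φ' t ≥ (M/2) t^α for t large
  obtain ⟨T, hTev⟩ := eventually_atTop.1
    ((hgrowth.eventually (lt_mem_nhds (by linarith : M / 2 < M))).and (eventually_ge_atTop 1))
  set T₀ : ℝ := max T 1 with hT₀def
  have hT₀1 : (1:ℝ) ≤ T₀ := le_max_right _ _
  have hT₀ : ∀ t : ℝ, T₀ ≤ t → M / 2 * t ^ α ≤ φ' t := by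
    intro t ht
    obtain ⟨h1, h2⟩ := hTev t (le_trans (le_max_left _ _) ht)
    have htpos : (0:ℝ) < t := lt_of_lt_of_le one_pos h2
    have hpow : (0:ℝ) < t ^ α := Real.rpow_pos_of_pos htpos α
    exact ((lt_div_iff₀ hpow).1 h1).le
  -- constants
  set β : ℝ := (α - 1) / 2 with hβdef
  have hβpos : 0 < β := by rw [hβdef]; linarith
  set C : ℝ := Real.sqrt (6 / M) with hCdef
  have hCpos : 0 < C := Real.sqrt_pos.2 (by positivity)
  have hCsq : C ^ 2 = 6 / M := Real.sq_sqrt (by positivity)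
  -- antitonicity of x ↦ x^(-β)
  have hanti : ∀ x y : ℝ, 0 < x → x ≤ y → y ^ (-β) ≤ x ^ (-β) := by
    intro x y hx hxy
    rw [Real.rpow_neg hx.le, Real.rpow_neg (hx.trans_le hxy).le]
    exact inv_anti₀ (Real.rpow_pos_of_pos hx β)
      (Real.rpow_le_rpow hx.le hxy hβpos.le)
  -- choose a large starting point R
  have hev2 : ∀ᶠ t : ℝ in atTop, (T₀ ≤ t ∧ 1 ≤ t) ∧ C * t ^ (-β) < 1 := by
    have h1 : Tendsto (fun t : ℝ => C * t ^ (-β)) atTop (𝓝 0) := by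
      have := (tendsto_rpow_neg_atTop hβpos).const_mul C
      simpa using this
    exact ((eventually_ge_atTop T₀).and (eventually_ge_atTop 1)).and
      (Tendsto.eventually_lt_const (by norm_num) h1)
  obtain ⟨R, hRr₁, ⟨hRT₀, hR1⟩, hRC⟩ :=
    (((eventually_ge_atTop r₁).and (hblow.eventually hev2)).exists :
      ∃ R, r₁ ≤ R ∧ ((T₀ ≤ u R ∧ 1 ≤ u R) ∧ C * u R ^ (-β) < 1))
  set a0 : ℝ := u R with ha0def
  have ha0pos : (0:ℝ) < a0 := lt_of_lt_of_le one_pos hR1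
  -- the iteration
  set g : ℝ → ℝ := fun r => r + 2 * (C * u r ^ (-β)) with hgdef
  set seq : ℕ → ℝ := fun n => g^[n] R with hseqdef
  have hseq0 : seq 0 = R := rfl
  have hseqS : ∀ n, seq (n + 1) = seq n + 2 * (C * u (seq n) ^ (-β)) := by
    intro n
    simp only [hseqdef, Function.iterate_succ_apply', hgdef]
  clear_value seq
  clear_value g
  set q : ℝ := (2:ℝ) ^ (-β) with hqdef
  have hq0 : 0 < q := Real.rpow_pos_of_pos two_pos _
  have hq1 : q < 1 := Real.rpow_lt_one_of_one_lt_of_neg one_lt_two (by linarith)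
  set Eb : ℝ := 2 * (C * a0 ^ (-β)) / (1 - q) with hEbdef
  have hEbnn : 0 ≤ Eb := by
    apply div_nonneg
    · positivity
    · linarith
  clear_value Eb
  clear_value q
  -- the invariant
  have hinv : ∀ n : ℕ, r₁ ≤ seq n ∧ seq n ≤ R + Eb * (1 - q ^ n) ∧ 2 ^ n * a0 ≤ u (seq n) := by
    intro n
    induction n with
    | zero =>
      refine ⟨?_, ?_, ?_⟩
      · rw [hseq0]; exact hRr₁
      · rw [hseq0]; simp
      · rw [hseq0, ← ha0def]; norm_num
    | succ n ih =>
      obtain ⟨ih1, ih2, ih3⟩ := ih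
      have hrr₀ : r₀ ≤ seq n := le_trans hr₁r₀.le ih1
      have h2n : (1:ℝ) ≤ 2 ^ n := one_le_pow₀ (by norm_num)
      have h2npos : (0:ℝ) < 2 ^ n := by positivity
      have ha0le : a0 ≤ u (seq n) :=
        le_trans (le_mul_of_one_le_left ha0pos.le h2n) ih3
      have hurpos : 0 < u (seq n) := lt_of_lt_of_le ha0pos ha0le
      set h : ℝ := C * u (seq n) ^ (-β) with hhdef
      clear_value h
      have hhpos : 0 < h := by rw [hhdef]; positivity
      have hh1 : h ≤ 1 := by
        have h1 : u (seq n) ^ (-β) ≤ a0 ^ (-β) := hanti a0 _ ha0pos ha0le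
        have h2 : C * u (seq n) ^ (-β) ≤ C * a0 ^ (-β) :=
          mul_le_mul_of_nonneg_left h1 hCpos.le
        linarith
      have hstep := hB (seq n) h ih1 hhpos hh1
      have hφ'big : M / 2 * u (seq n) ^ α ≤ φ' (u (seq n)) :=
        hT₀ _ (le_trans hRT₀ ha0le)
      -- the exact computation h² (M/2) u^α / 3 = u
      have hcomp : h ^ 2 * (M / 2 * u (seq n) ^ α) / 3 = u (seq n) := by
        have e0 : h ^ 2 * (M / 2 * u (seq n) ^ α) / 3 =
            C ^ 2 * (M / 6) * (u (seq n) ^ (-β) * u (seq n) ^ (-β) * u (seq n) ^ α) := by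
          rw [hhdef]; ring
        rw [e0, hCsq, ← Real.rpow_add hurpos, ← Real.rpow_add hurpos,
          show -β + -β + α = 1 by rw [hβdef]; ring, Real.rpow_one]
        field_simp
      have hcomp' : u (seq n) ≤ h ^ 2 * φ' (u (seq n)) / 3 := by
        have h2 : h ^ 2 * (M / 2 * u (seq n) ^ α) ≤ h ^ 2 * φ' (u (seq n)) :=
          mul_le_mul_of_nonneg_left hφ'big (by positivity)
        linarith [hcomp]
      have hkey : 2 * u (seq n) ≤ u (seq n + 2 * h) := by linarith
      refine ⟨?_, ?_, ?_⟩
      · rw [hseqS, ← hhdef]; linarith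
      · rw [hseqS]
        have hq_pow : u (seq n) ^ (-β) ≤ q ^ n * a0 ^ (-β) := by
          have h1 : u (seq n) ^ (-β) ≤ ((2:ℝ) ^ n * a0) ^ (-β) :=
            hanti _ _ (by positivity) ih3
          have h2 : ((2:ℝ) ^ n * a0) ^ (-β) = ((2:ℝ) ^ n) ^ (-β) * a0 ^ (-β) :=
            Real.mul_rpow (by positivity) ha0pos.le
          have h3 : ((2:ℝ) ^ n) ^ (-β) = q ^ n := by
            rw [← Real.rpow_natCast (2:ℝ) n, ← Real.rpow_natCast q n, hqdef,
              ← Real.rpow_mul (by norm_num : (0:ℝ) ≤ 2),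
              ← Real.rpow_mul (by norm_num : (0:ℝ) ≤ 2)]
            ring_nf
          rw [h2, h3] at h1
          exact h1
        have h2h : 2 * h ≤ Eb * (1 - q) * q ^ n := by
          have hEbq : Eb * (1 - q) = 2 * (C * a0 ^ (-β)) := by
            rw [hEbdef]
            exact div_mul_cancel₀ _ (by linarith : (1:ℝ) - q ≠ 0)
          rw [hEbq]
          calc 2 * h = 2 * C * u (seq n) ^ (-β) := by rw [hhdef]; ring
            _ ≤ 2 * C * (q ^ n * a0 ^ (-β)) :=
              mul_le_mul_of_nonneg_left hq_pow (by positivity)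
            _ = 2 * (C * a0 ^ (-β)) * q ^ n := by ring
        have hfin : seq n + 2 * (C * u (seq n) ^ (-β)) ≤
            R + Eb * (1 - q ^ n) + Eb * (1 - q) * q ^ n := by
          rw [← hhdef]; linarith
        refine le_trans hfin (le_of_eq ?_)
        rw [pow_succ]; ring
      · rw [hseqS, ← hhdef]
        calc (2:ℝ) ^ (n + 1) * a0 = 2 * (2 ^ n * a0) := by ring
          _ ≤ 2 * u (seq n) := by linarith
          _ ≤ u (seq n + 2 * h) := hkey
  -- final contradiction
  obtain ⟨n, hn⟩ := pow_unbounded_of_one_lt (u (R + Eb)) (one_lt_two (α := ℝ))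
  obtain ⟨h1, h2, h3⟩ := hinv n
  have hqn0 : 0 ≤ q ^ n := (pow_pos hq0 n).le
  have hseqle : seq n ≤ R + Eb := by
    have hE1 : Eb * (1 - q ^ n) ≤ Eb := by nlinarith [mul_nonneg hEbnn hqn0]
    linarith
  have h4 : u (seq n) ≤ u (R + Eb) :=
    humono _ _ (le_trans hr₁r₀.le h1) hseqle
  have h5 : (2:ℝ) ^ n ≤ 2 ^ n * a0 := le_mul_of_one_le_right (by positivity) hR1
  linarith
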